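/- Consider Algorithm Offline ML-IRL run for K iterations with stepsize α = α₀ K^{−1/2} (α₀ > 0). Assume ||∇_θ r(s,a;θ)|| ≤ L_r and ||∇_θ r(s,a;θ₁) − ∇_θ r(s,a;θ₂)|| ≤ L_g ||θ₁ − θ₂|| for all s, a, θ, θ₁, θ₂, and that the initial error satisfies ||Q_0 − Q_{θ_0}||_∞ ≤ Δ₀. Then, with L_q = L_r/(1−γ), the policy estimates track the optimal policies at the rate (1/K) Σ_{k=0}^{K−1} E[ || log π_{k+1} − log π_{θ_k} ||_∞ ] ≤ (2 + 4γ/(1−γ)²) ε_app + 2Δ₀/((1−γ)K) + 8α₀ L_q²/((1−γ)√K); in particular this average is O(K^{−1/2}) + O(ε_app). -/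

import Mathlib

open Real BigOperators Finset MeasureTheory
open scoped ProbabilityTheory

noncomputable section

/-- `P` is a transition kernel: each row `P s a ·` is a probability distribution. -/
def IsKernel {S A : Type} [Fintype S] (P : S → A → S → ℝ) : Prop :=
  (∀ s a s', 0 ≤ P s a s') ∧ ∀ s a, ∑ s', P s a s' = 1

/-- `p` is a policy: each `p s ·` is a probability distribution over actions. -/
def IsPolicy {S A : Type} [Fintype A] (p : S → A → ℝ) : Prop :=
  (∀ s a, 0 ≤ p s a) ∧ ∀ s, ∑ a, p s a = 1

/-- `η` is a probability distribution over states. -/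
def IsDist {S : Type} [Fintype S] (η : S → ℝ) : Prop :=
  (∀ s, 0 ≤ η s) ∧ ∑ s, η s = 1

/-- Distribution of the state at time `t` under initial distribution `η`,
policy `pol` and transition kernel `P`. -/
def stateDist {S A : Type} [Fintype S] [Fintype A]
    (P : S → A → S → ℝ) (pol : S → A → ℝ) (η : S → ℝ) : ℕ → S → ℝ
  | 0 => η
  | (t + 1) => fun s' => ∑ s, ∑ a, stateDist P pol η t s * pol s a * P s a s'

/-- `E_{τ ∼ (η, pol, P)} [ ∑_t γ^t f(s_t, a_t) ]`. -/
def discSum {S A : Type} [Fintype S] [Fintype A]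
    (γ : ℝ) (P : S → A → S → ℝ) (pol : S → A → ℝ) (η : S → ℝ) (f : S → A → ℝ) : ℝ :=
  ∑' t : ℕ, γ ^ t * ∑ s, ∑ a, stateDist P pol η t s * pol s a * f s a

/-- Discounted state-action visitation measure
`d(s,a) = (1-γ) pol(a|s) ∑_t γ^t Pr(s_t = s)`. -/
def visit {S A : Type} [Fintype S] [Fintype A]
    (γ : ℝ) (P : S → A → S → ℝ) (pol : S → A → ℝ) (η : S → ℝ) (s : S) (a : A) : ℝ :=
  (1 - γ) * pol s a * ∑' t : ℕ, γ ^ t * stateDist P pol η t s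

/-- Log-sum-exp soft value function `V(s) = log ∑_a exp Q(s,a)`. -/
def lse {S A : Type} [Fintype A] (Q : S → A → ℝ) (s : S) : ℝ :=
  Real.log (∑ a, Real.exp (Q s a))

/-- Softmax policy `π(a|s) = exp Q(s,a) / ∑_{a'} exp Q(s,a')`. -/
def softmax {S A : Type} [Fintype A] (Q : S → A → ℝ) (s : S) (a : A) : ℝ :=
  Real.exp (Q s a) / ∑ a', Real.exp (Q s a')

/-- Distribution of the state at time `t` starting from the fixed state `s0`,
following policy `pol` and kernel `P`. -/
def stateDistFrom {S A : Type} [Fintype S] [Fintype A] [DecidableEq S]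
    (P : S → A → S → ℝ) (pol : S → A → ℝ) (s0 : S) : ℕ → S → ℝ
  | 0 => fun s => if s = s0 then 1 else 0
  | (t + 1) => fun s' => ∑ s, ∑ a, stateDistFrom P pol s0 t s * pol s a * P s a s'

/-- Shannon entropy `H(p) = -∑_a p(a) log p(a)`. -/
def entropyFn {A : Type} [Fintype A] (p : A → ℝ) : ℝ :=
  ∑ a, -(p a * Real.log (p a))

/-- The soft value function of the policy `pol` under kernel `P` and reward `R`:
`V^π(s₀) = E_{τ∼(π,P)}[∑_t γ^t (R(s_t,a_t) + H(π(·|s_t))) | s_0 = s₀]`. -/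
def Vpol {S A : Type} [Fintype S] [Fintype A] [DecidableEq S]
    (γ : ℝ) (P : S → A → S → ℝ) (pol : S → A → ℝ) (R : S → A → ℝ) (s0 : S) : ℝ :=
  ∑' t : ℕ, γ ^ t *
    ∑ s, stateDistFrom P pol s0 t s * (entropyFn (pol s) + ∑ a, pol s a * R s a)

/-- The soft Q-function of the policy `pol`:
`Q^π(s,a) = R(s,a) + γ ∑_{s'} P(s'|s,a) V^π(s')`. -/
def Qpol {S A : Type} [Fintype S] [Fintype A] [DecidableEq S]
    (γ : ℝ) (P : S → A → S → ℝ) (pol : S → A → ℝ) (R : S → A → ℝ) (s : S) (a : A) : ℝ :=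
  R s a + γ * ∑ s', P s a s' * Vpol γ P pol R s'


section MLIRLAux

variable {S A : Type} [Fintype S] [Fintype A] [Nonempty S] [Nonempty A] [DecidableEq S]

/-- sup over all state-action pairs. -/
def nsup (F : S → A → ℝ) : ℝ :=
  Finset.univ.sup' Finset.univ_nonempty (fun p : S × A => F p.1 p.2)

lemma le_nsup (F : S → A → ℝ) (s : S) (a : A) : F s a ≤ nsup F :=
  Finset.le_sup' (fun p : S × A => F p.1 p.2) (Finset.mem_univ (s, a))

lemma nsup_le {F : S → A → ℝ} {c : ℝ} (h : ∀ s a, F s a ≤ c) : nsup F ≤ c :=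
  Finset.sup'_le _ _ fun p _ => h p.1 p.2

lemma sum_exp_pos (Q : S → A → ℝ) (s : S) : 0 < ∑ a, Real.exp (Q s a) :=
  Finset.sum_pos (fun a _ => Real.exp_pos _) Finset.univ_nonempty

lemma lse_le_of_le {Q₁ Q₂ : S → A → ℝ} {c : ℝ} (s : S) (h : ∀ a, Q₁ s a ≤ Q₂ s a + c) :
    lse Q₁ s ≤ lse Q₂ s + c := by
  have h1 : ∑ a, Real.exp (Q₁ s a) ≤ (∑ a, Real.exp (Q₂ s a)) * Real.exp c := by
    rw [Finset.sum_mul]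
    refine Finset.sum_le_sum fun a _ => ?_
    rw [← Real.exp_add]
    exact Real.exp_le_exp.2 (h a)
  have := Real.log_le_log (sum_exp_pos Q₁ s) h1
  rwa [Real.log_mul (ne_of_gt (sum_exp_pos Q₂ s)) (Real.exp_ne_zero c), Real.log_exp] at this

lemma softmax_policy (Q : S → A → ℝ) : IsPolicy (softmax Q) :=
  ⟨fun s a => div_nonneg (Real.exp_pos _).le (sum_exp_pos Q s).le,
   fun s => by
    unfold softmax
    rw [← Finset.sum_div]
    exact div_self (ne_of_gt (sum_exp_pos Q s))⟩

lemma log_softmax (Q : S → A → ℝ) (s : S) (a : A) :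
    Real.log (softmax Q s a) = Q s a - lse Q s := by
  unfold softmax lse
  rw [Real.log_div (Real.exp_ne_zero _) (ne_of_gt (sum_exp_pos Q s)), Real.log_exp]

/-- Gibbs variational inequality. -/
lemma gibbs_le {p : A → ℝ} (hp0 : ∀ a, 0 ≤ p a) (hp1 : ∑ a, p a = 1) (q : A → ℝ) :
    entropyFn p + ∑ a, p a * q a ≤ Real.log (∑ a, Real.exp (q a)) := by
  set Z := ∑ a, Real.exp (q a) with hZ
  have hZpos : 0 < Z := Finset.sum_pos (fun a _ => Real.exp_pos _) Finset.univ_nonempty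
  have key : ∀ a, p a * (q a - Real.log (p a) - Real.log Z) ≤ Real.exp (q a) / Z - p a := by
    intro a
    rcases eq_or_lt_of_le (hp0 a) with h0 | h0
    · rw [← h0]
      simp only [zero_mul, zero_sub, neg_nonpos, sub_zero]
      positivity
    · have hx : (0:ℝ) < Real.exp (q a) / (p a * Z) := by positivity
      have hlog := Real.log_le_sub_one_of_pos hx
      have hlogeq : Real.log (Real.exp (q a) / (p a * Z)) =
          q a - Real.log (p a) - Real.log Z := by
        rw [Real.log_div (Real.exp_ne_zero _) (by positivity),
          Real.log_mul (ne_of_gt h0) (ne_of_gt hZpos), Real.log_exp]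
        ring
      rw [hlogeq] at hlog
      have := mul_le_mul_of_nonneg_left hlog (hp0 a)
      calc p a * (q a - Real.log (p a) - Real.log Z)
          ≤ p a * (Real.exp (q a) / (p a * Z) - 1) := this
        _ = Real.exp (q a) / Z - p a := by
            field_simp
  have hsum : ∑ a, p a * (q a - Real.log (p a) - Real.log Z) ≤ 0 := by
    calc ∑ a, p a * (q a - Real.log (p a) - Real.log Z)
        ≤ ∑ a, (Real.exp (q a) / Z - p a) := Finset.sum_le_sum fun a _ => key a
      _ = (∑ a, Real.exp (q a)) / Z - ∑ a, p a := by
          rw [Finset.sum_sub_distrib, Finset.sum_div]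
      _ = 0 := by rw [hp1, ← hZ, div_self (ne_of_gt hZpos)]; ring
  have expand : entropyFn p + ∑ a, p a * q a =
      (∑ a, p a * (q a - Real.log (p a) - Real.log Z)) + Real.log Z := by
    unfold entropyFn
    rw [← Finset.sum_add_distrib]
    have : ∀ a ∈ Finset.univ, -(p a * Real.log (p a)) + p a * q a
        = p a * (q a - Real.log (p a) - Real.log Z) + p a * Real.log Z := by
      intro a _; ring
    rw [Finset.sum_congr rfl this, Finset.sum_add_distrib, ← Finset.sum_mul, hp1, one_mul]
  rw [expand]
  linarith [hsum]

/-- Gibbs equality for the softmax policy. -/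
lemma gibbs_softmax (Q : S → A → ℝ) (s : S) :
    entropyFn (softmax Q s) + ∑ a, softmax Q s a * Q s a = lse Q s := by
  have hlog : ∀ a, Real.log (softmax Q s a) = Q s a - lse Q s := log_softmax Q s
  unfold entropyFn
  have : ∀ a ∈ Finset.univ, -(softmax Q s a * Real.log (softmax Q s a)) + softmax Q s a * Q s a
      = softmax Q s a * lse Q s := by
    intro a _; rw [hlog a]; ring
  rw [← Finset.sum_add_distrib, Finset.sum_congr rfl this, ← Finset.sum_mul,
    (softmax_policy Q).2 s, one_mul]

end MLIRLAux

section MLIRLAux2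
set_option linter.unusedSectionVars false

variable {S A : Type} [Fintype S] [Fintype A] [Nonempty S] [Nonempty A] [DecidableEq S]
variable {γ : ℝ} {P : S → A → S → ℝ}

/-- The soft Bellman operator for a fixed policy. -/
def Tpi (γ : ℝ) (P : S → A → S → ℝ) (pol : S → A → ℝ) (R : S → A → ℝ)
    (Q : S → A → ℝ) (s : S) (a : A) : ℝ :=
  R s a + γ * ∑ s', P s a s' * (entropyFn (pol s') + ∑ a', pol s' a' * Q s' a')

/-- The optimal soft Bellman operator. -/
def Topt (γ : ℝ) (P : S → A → S → ℝ) (R : S → A → ℝ) (Q : S → A → ℝ) (s : S) (a : A) : ℝ :=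
  R s a + γ * ∑ s', P s a s' * lse Q s'

lemma sum_P_le (hP : IsKernel P) {x y : S → ℝ} (s : S) (a : A) (h : ∀ s', x s' ≤ y s') :
    ∑ s', P s a s' * x s' ≤ ∑ s', P s a s' * y s' :=
  Finset.sum_le_sum fun s' _ => mul_le_mul_of_nonneg_left (h s') (hP.1 s a s')

lemma sum_P_shift (hP : IsKernel P) {x y : S → ℝ} {c : ℝ} (s : S) (a : A)
    (h : ∀ s', x s' ≤ y s' + c) :
    ∑ s', P s a s' * x s' ≤ (∑ s', P s a s' * y s') + c := by
  have := sum_P_le hP s a h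
  calc ∑ s', P s a s' * x s' ≤ ∑ s', P s a s' * (y s' + c) := this
    _ = (∑ s', P s a s' * y s') + c := by
        rw [Finset.sum_congr rfl (fun s' _ => mul_add (P s a s') (y s') c),
          Finset.sum_add_distrib, ← Finset.sum_mul, hP.2 s a, one_mul]

lemma Tpi_shift (hγ : 0 ≤ γ) (hP : IsKernel P) {pol : S → A → ℝ} (hpol : IsPolicy pol)
    {R : S → A → ℝ} {Q₁ Q₂ : S → A → ℝ} {c : ℝ} (h : ∀ s a, Q₁ s a ≤ Q₂ s a + c)
    (s : S) (a : A) :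
    Tpi γ P pol R Q₁ s a ≤ Tpi γ P pol R Q₂ s a + γ * c := by
  unfold Tpi
  have hin : ∀ s', entropyFn (pol s') + ∑ a', pol s' a' * Q₁ s' a'
      ≤ (entropyFn (pol s') + ∑ a', pol s' a' * Q₂ s' a') + c := by
    intro s'
    have : ∑ a', pol s' a' * Q₁ s' a' ≤ (∑ a', pol s' a' * Q₂ s' a') + c := by
      calc ∑ a', pol s' a' * Q₁ s' a' ≤ ∑ a', pol s' a' * (Q₂ s' a' + c) :=
            Finset.sum_le_sum fun a' _ =>
              mul_le_mul_of_nonneg_left (h s' a') (hpol.1 s' a')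
        _ = (∑ a', pol s' a' * Q₂ s' a') + c := by
            rw [Finset.sum_congr rfl (fun a' _ => mul_add (pol s' a') (Q₂ s' a') c),
              Finset.sum_add_distrib, ← Finset.sum_mul, hpol.2 s', one_mul]
    linarith
  have := sum_P_shift hP (x := fun s' => entropyFn (pol s') + ∑ a', pol s' a' * Q₁ s' a')
    (y := fun s' => entropyFn (pol s') + ∑ a', pol s' a' * Q₂ s' a') s a hin
  nlinarith [this]

lemma Topt_shift (hγ : 0 ≤ γ) (hP : IsKernel P)
    {R : S → A → ℝ} {Q₁ Q₂ : S → A → ℝ} {c : ℝ} (h : ∀ s a, Q₁ s a ≤ Q₂ s a + c)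
    (s : S) (a : A) :
    Topt γ P R Q₁ s a ≤ Topt γ P R Q₂ s a + γ * c := by
  unfold Topt
  have hin : ∀ s', lse Q₁ s' ≤ lse Q₂ s' + c := fun s' => lse_le_of_le s' (h s')
  have := sum_P_shift hP (x := fun s' => lse Q₁ s') (y := fun s' => lse Q₂ s') s a hin
  nlinarith [this]

lemma Tpi_le_Topt (hγ : 0 ≤ γ) (hP : IsKernel P) {pol : S → A → ℝ} (hpol : IsPolicy pol)
    {R : S → A → ℝ} (Q : S → A → ℝ) (s : S) (a : A) :
    Tpi γ P pol R Q s a ≤ Topt γ P R Q s a := by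
  unfold Tpi Topt
  have : ∀ s', entropyFn (pol s') + ∑ a', pol s' a' * Q s' a' ≤ lse Q s' := fun s' =>
    gibbs_le (fun a' => hpol.1 s' a') (hpol.2 s') (Q s')
  have := sum_P_le hP (x := fun s' => entropyFn (pol s') + ∑ a', pol s' a' * Q s' a')
    (y := fun s' => lse Q s') s a this
  nlinarith [this]

lemma Tpi_softmax {R : S → A → ℝ} (Q : S → A → ℝ) (s : S) (a : A) :
    Tpi γ P (softmax Q) R Q s a = Topt γ P R Q s a := by
  unfold Tpi Topt
  congr 2
  refine Finset.sum_congr rfl fun s' _ => ?_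
  rw [gibbs_softmax Q s']

/- === state distribution facts === -/

lemma sdf_nonneg (hP : IsKernel P) {pol : S → A → ℝ} (hpol : IsPolicy pol) (s0 : S) :
    ∀ t s, 0 ≤ stateDistFrom P pol s0 t s := by
  intro t
  induction t with
  | zero => intro s; simp only [stateDistFrom]; split <;> norm_num
  | succ t ih =>
    intro s'
    exact Finset.sum_nonneg fun s _ => Finset.sum_nonneg fun a _ =>
      mul_nonneg (mul_nonneg (ih s) (hpol.1 s a)) (hP.1 s a s')

lemma sdf_sum (hP : IsKernel P) {pol : S → A → ℝ} (hpol : IsPolicy pol) (s0 : S) :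
    ∀ t, ∑ s, stateDistFrom P pol s0 t s = 1 := by
  intro t
  induction t with
  | zero => simp [stateDistFrom]
  | succ t ih =>
    simp only [stateDistFrom]
    rw [Finset.sum_comm]
    calc ∑ s, ∑ s', ∑ a, stateDistFrom P pol s0 t s * pol s a * P s a s'
        = ∑ s, ∑ a, ∑ s', stateDistFrom P pol s0 t s * pol s a * P s a s' :=
          Finset.sum_congr rfl fun s _ => Finset.sum_comm
      _ = ∑ s, ∑ a, stateDistFrom P pol s0 t s * pol s a := by
          refine Finset.sum_congr rfl fun s _ => Finset.sum_congr rfl fun a _ => ?_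
          rw [← Finset.mul_sum, hP.2 s a, mul_one]
      _ = ∑ s, stateDistFrom P pol s0 t s := by
          refine Finset.sum_congr rfl fun s _ => ?_
          rw [← Finset.mul_sum, hpol.2 s, mul_one]
      _ = 1 := ih

lemma sdf_le_one (hP : IsKernel P) {pol : S → A → ℝ} (hpol : IsPolicy pol) (s0 : S)
    (t : ℕ) (s : S) : stateDistFrom P pol s0 t s ≤ 1 := by
  have h := sdf_sum hP hpol s0 t
  calc stateDistFrom P pol s0 t s ≤ ∑ s', stateDistFrom P pol s0 t s' :=
        Finset.single_le_sum (fun s' _ => sdf_nonneg hP hpol s0 t s') (Finset.mem_univ s)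
    _ = 1 := h

lemma sdf_step_sum (pol : S → A → ℝ) (s0 : S) (t : ℕ) (w : S → ℝ) :
    ∑ s', stateDistFrom P pol s0 (t+1) s' * w s'
      = ∑ s, stateDistFrom P pol s0 t s * ∑ a, pol s a * ∑ s', P s a s' * w s' := by
  show ∑ s', (∑ s, ∑ a, stateDistFrom P pol s0 t s * pol s a * P s a s') * w s' = _
  simp only [Finset.sum_mul, Finset.mul_sum]
  rw [Finset.sum_comm]
  refine Finset.sum_congr rfl fun s _ => ?_
  rw [Finset.sum_comm]
  exact Finset.sum_congr rfl fun a _ => Finset.sum_congr rfl fun s' _ => by ring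

lemma sdf_markov_sum (pol : S → A → ℝ) :
    ∀ (t : ℕ) (s0 : S) (w : S → ℝ),
      ∑ s, stateDistFrom P pol s0 (t+1) s * w s
        = ∑ a, ∑ s₁, pol s0 a * P s0 a s₁ * ∑ s, stateDistFrom P pol s₁ t s * w s := by
  intro t
  induction t with
  | zero =>
    intro s0 w
    rw [sdf_step_sum]
    simp only [stateDistFrom, ite_mul, one_mul, zero_mul, Finset.sum_ite_eq',
      Finset.mem_univ, if_true]
    refine Finset.sum_congr rfl fun a _ => ?_
    rw [Finset.mul_sum]
    exact Finset.sum_congr rfl fun s' _ => by ring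
  | succ t ih =>
    intro s0 w
    rw [sdf_step_sum, ih s0 (fun s => ∑ a, pol s a * ∑ s', P s a s' * w s')]
    refine Finset.sum_congr rfl fun a _ => Finset.sum_congr rfl fun s₁ _ => ?_
    rw [← sdf_step_sum]

/- === Bellman equation for Vpol / Qpol === -/

lemma vterm_bound (hP : IsKernel P) {pol : S → A → ℝ} (hpol : IsPolicy pol)
    (h : S → ℝ) (s0 : S) (t : ℕ) :
    |∑ s, stateDistFrom P pol s0 t s * h s| ≤ ∑ s, |h s| := by
  calc |∑ s, stateDistFrom P pol s0 t s * h s|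
      ≤ ∑ s, |stateDistFrom P pol s0 t s * h s| := Finset.abs_sum_le_sum_abs _ _
    _ ≤ ∑ s, |h s| := by
        refine Finset.sum_le_sum fun s _ => ?_
        rw [abs_mul, abs_of_nonneg (sdf_nonneg hP hpol s0 t s)]
        exact mul_le_of_le_one_left (abs_nonneg _) (sdf_le_one hP hpol s0 t s)

lemma Vpol_summable (hγ0 : 0 ≤ γ) (hγ1 : γ < 1) (hP : IsKernel P)
    {pol : S → A → ℝ} (hpol : IsPolicy pol) (h : S → ℝ) (s0 : S) :
    Summable (fun t : ℕ => γ ^ t * ∑ s, stateDistFrom P pol s0 t s * h s) := by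
  refine Summable.of_norm_bounded (g := fun t => (∑ s, |h s|) * γ ^ t)
    ((summable_geometric_of_lt_one hγ0 hγ1).mul_left _) fun t => ?_
  rw [Real.norm_eq_abs, abs_mul, abs_pow, abs_of_nonneg hγ0, mul_comm]
  exact mul_le_mul_of_nonneg_right (vterm_bound hP hpol h s0 t) (pow_nonneg hγ0 t)

lemma Vpol_rec (hγ0 : 0 ≤ γ) (hγ1 : γ < 1) (hP : IsKernel P)
    {pol : S → A → ℝ} (hpol : IsPolicy pol) (R : S → A → ℝ) (s0 : S) :
    Vpol γ P pol R s0 = (entropyFn (pol s0) + ∑ a, pol s0 a * R s0 a)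
      + γ * ∑ a, ∑ s₁, pol s0 a * P s0 a s₁ * Vpol γ P pol R s₁ := by
  set h : S → ℝ := fun s => entropyFn (pol s) + ∑ a, pol s a * R s a with hh
  have hsum : ∀ s1 : S, Summable (fun t : ℕ => γ ^ t * ∑ s, stateDistFrom P pol s1 t s * h s) :=
    fun s1 => Vpol_summable hγ0 hγ1 hP hpol h s1
  have hV : ∀ s1 : S, Vpol γ P pol R s1 = ∑' t : ℕ, γ ^ t * ∑ s, stateDistFrom P pol s1 t s * h s :=
    fun s1 => rfl
  rw [hV s0, Summable.tsum_eq_zero_add (hsum s0)]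
  have h0 : γ ^ 0 * ∑ s, stateDistFrom P pol s0 0 s * h s = h s0 := by
    simp [stateDistFrom, ite_mul, one_mul, zero_mul]
  rw [h0]
  congr 1
  have hterm : ∀ t : ℕ, γ ^ (t+1) * ∑ s, stateDistFrom P pol s0 (t+1) s * h s
      = γ * ∑ a, ∑ s₁, pol s0 a * P s0 a s₁ * (γ ^ t * ∑ s, stateDistFrom P pol s₁ t s * h s) := by
    intro t
    rw [sdf_markov_sum pol t s0 h]
    have key : ∀ (c F : ℝ), γ^(t+1) * (c * F) = γ * (c * (γ^t * F)) := fun c F => by ring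
    rw [Finset.mul_sum, Finset.mul_sum]
    refine Finset.sum_congr rfl fun a _ => ?_
    rw [Finset.mul_sum, Finset.mul_sum]
    exact Finset.sum_congr rfl fun s₁ _ => key _ _
  calc ∑' t : ℕ, γ ^ (t+1) * ∑ s, stateDistFrom P pol s0 (t+1) s * h s
      = ∑' t : ℕ, γ * ∑ a, ∑ s₁, pol s0 a * P s0 a s₁ *
          (γ ^ t * ∑ s, stateDistFrom P pol s₁ t s * h s) := tsum_congr hterm
    _ = γ * ∑' t : ℕ, ∑ a, ∑ s₁, pol s0 a * P s0 a s₁ *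
          (γ ^ t * ∑ s, stateDistFrom P pol s₁ t s * h s) := tsum_mul_left
    _ = γ * ∑ a, ∑ s₁, pol s0 a * P s0 a s₁ * Vpol γ P pol R s₁ := by
        congr 1
        rw [Summable.tsum_finsetSum fun a _ => summable_sum fun s₁ _ => ((hsum s₁).mul_left _)]
        refine Finset.sum_congr rfl fun a _ => ?_
        rw [Summable.tsum_finsetSum fun s₁ _ => ((hsum s₁).mul_left _)]
        refine Finset.sum_congr rfl fun s₁ _ => ?_
        rw [tsum_mul_left, hV s₁]

end MLIRLAux2

section MLIRLAux3
set_option linter.unusedSectionVars false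
variable {S A : Type} [Fintype S] [Fintype A] [Nonempty S] [Nonempty A] [DecidableEq S]
variable {γ : ℝ} {P : S → A → S → ℝ}

lemma Vpol_eq_avg (hγ0 : 0 ≤ γ) (hγ1 : γ < 1) (hP : IsKernel P)
    {pol : S → A → ℝ} (hpol : IsPolicy pol) (R : S → A → ℝ) (s : S) :
    Vpol γ P pol R s = entropyFn (pol s) + ∑ a, pol s a * Qpol γ P pol R s a := by
  rw [Vpol_rec hγ0 hγ1 hP hpol R s]
  unfold Qpol
  rw [add_assoc]
  congr 1
  simp only [mul_add, Finset.sum_add_distrib]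
  congr 1
  rw [Finset.mul_sum]
  refine Finset.sum_congr rfl fun a _ => ?_
  rw [Finset.mul_sum, Finset.mul_sum, Finset.mul_sum]
  exact Finset.sum_congr rfl fun s₁ _ => by ring

lemma Qpol_bellman (hγ0 : 0 ≤ γ) (hγ1 : γ < 1) (hP : IsKernel P)
    {pol : S → A → ℝ} (hpol : IsPolicy pol) (R : S → A → ℝ) (s : S) (a : A) :
    Qpol γ P pol R s a = Tpi γ P pol R (Qpol γ P pol R) s a := by
  unfold Tpi
  show R s a + γ * ∑ s', P s a s' * Vpol γ P pol R s' = _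
  congr 2
  exact Finset.sum_congr rfl fun s' _ => by rw [Vpol_eq_avg hγ0 hγ1 hP hpol R s']

lemma nsup_fix (hγ1 : γ < 1) {F : S → A → ℝ} {c : ℝ}
    (h : ∀ s a, F s a ≤ c + γ * nsup F) : nsup F ≤ c / (1 - γ) := by
  have h1 : nsup F ≤ c + γ * nsup F := nsup_le fun s a => h s a
  have h2 : (0:ℝ) < 1 - γ := by linarith
  rw [le_div_iff₀ h2]
  nlinarith

/-- Lipschitz dependence of `Qpol` on the reward. -/
lemma Qpol_reward_lip (hγ0 : 0 ≤ γ) (hγ1 : γ < 1) (hP : IsKernel P)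
    {pol : S → A → ℝ} (hpol : IsPolicy pol) {R R' : S → A → ℝ} {ρ : ℝ}
    (hρ : ∀ s a, |R s a - R' s a| ≤ ρ) (s : S) (a : A) :
    |Qpol γ P pol R s a - Qpol γ P pol R' s a| ≤ ρ / (1 - γ) := by
  have main : ∀ (R₁ R₂ : S → A → ℝ), (∀ s a, R₁ s a - R₂ s a ≤ ρ) →
      ∀ s a, Qpol γ P pol R₁ s a - Qpol γ P pol R₂ s a ≤ ρ / (1 - γ) := by
    intro R₁ R₂ hR s a
    set F : S → A → ℝ := fun s a => Qpol γ P pol R₁ s a - Qpol γ P pol R₂ s a with hF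
    have hfix : ∀ s a, F s a ≤ ρ + γ * nsup F := by
      intro s a
      have hQle : ∀ s a, Qpol γ P pol R₁ s a ≤ Qpol γ P pol R₂ s a + nsup F :=
        fun s a => by have := le_nsup F s a; simp only [hF] at this ⊢; linarith
      have h1 := Tpi_shift hγ0 hP hpol (R := R₂) hQle s a
      have e1 : Qpol γ P pol R₁ s a = Tpi γ P pol R₁ (Qpol γ P pol R₁) s a :=
        Qpol_bellman hγ0 hγ1 hP hpol R₁ s a
      have e2 : Qpol γ P pol R₂ s a = Tpi γ P pol R₂ (Qpol γ P pol R₂) s a :=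
        Qpol_bellman hγ0 hγ1 hP hpol R₂ s a
      have e3 : ∀ Q, Tpi γ P pol R₁ Q s a = (R₁ s a - R₂ s a) + Tpi γ P pol R₂ Q s a := by
        intro Q; unfold Tpi; ring
      have hRs := hR s a
      show Qpol γ P pol R₁ s a - Qpol γ P pol R₂ s a ≤ ρ + γ * nsup F
      rw [e1, e2, e3]
      linarith
    have := nsup_fix hγ1 hfix
    exact le_trans (le_nsup F s a) this
  have h1 := main R R' (fun s a => by have := hρ s a; rw [abs_le] at this; linarith) s a
  have h2 := main R' R (fun s a => by have := hρ s a; rw [abs_le] at this; linarith) s a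
  rw [abs_le]
  constructor <;> linarith

/-- Lipschitz dependence of the optimal soft Q-function on the reward. -/
lemma Qopt_reward_lip (hγ0 : 0 ≤ γ) (hγ1 : γ < 1) (hP : IsKernel P)
    {R R' : S → A → ℝ} {Qs Qs' : S → A → ℝ} {ρ : ℝ}
    (hQs : ∀ s a, Qs s a = Topt γ P R Qs s a)
    (hQs' : ∀ s a, Qs' s a = Topt γ P R' Qs' s a)
    (hρ : ∀ s a, |R s a - R' s a| ≤ ρ) (s : S) (a : A) :
    |Qs s a - Qs' s a| ≤ ρ / (1 - γ) := by
  have main : ∀ (R₁ R₂ Q₁ Q₂ : S → A → ℝ), (∀ s a, Q₁ s a = Topt γ P R₁ Q₁ s a) →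
      (∀ s a, Q₂ s a = Topt γ P R₂ Q₂ s a) → (∀ s a, R₁ s a - R₂ s a ≤ ρ) →
      ∀ s a, Q₁ s a - Q₂ s a ≤ ρ / (1 - γ) := by
    intro R₁ R₂ Q₁ Q₂ hQ₁ hQ₂ hR s a
    set F : S → A → ℝ := fun s a => Q₁ s a - Q₂ s a with hF
    have hfix : ∀ s a, F s a ≤ ρ + γ * nsup F := by
      intro s a
      have hQle : ∀ s a, Q₁ s a ≤ Q₂ s a + nsup F :=
        fun s a => by have := le_nsup F s a; simp only [hF] at this ⊢; linarith
      have h1 := Topt_shift hγ0 hP (R := R₂) hQle s a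
      have e3 : Topt γ P R₁ Q₁ s a = (R₁ s a - R₂ s a) + Topt γ P R₂ Q₁ s a := by
        unfold Topt; ring
      have hRs := hR s a
      show Q₁ s a - Q₂ s a ≤ ρ + γ * nsup F
      rw [hQ₁ s a, hQ₂ s a, e3]
      linarith
    exact le_trans (le_nsup F s a) (nsup_fix hγ1 hfix)
  have h1 := main R R' Qs Qs' hQs hQs' (fun s a => by have := hρ s a; rw [abs_le] at this; linarith) s a
  have h2 := main R' R Qs' Qs hQs' hQs (fun s a => by have := hρ s a; rw [abs_le] at this; linarith) s a
  rw [abs_le]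
  constructor <;> linarith

end MLIRLAux3

section MLIRLAux4
set_option linter.unusedSectionVars false
variable {S A : Type} [Fintype S] [Fintype A] [Nonempty S] [Nonempty A] [DecidableEq S]
variable {γ : ℝ} {P : S → A → S → ℝ}

/-- Soft optimality: the soft Q-function of any policy is below the optimal one. -/
lemma Qpol_le_Qopt (hγ0 : 0 ≤ γ) (hγ1 : γ < 1) (hP : IsKernel P)
    {pol : S → A → ℝ} (hpol : IsPolicy pol) {R Qs : S → A → ℝ}
    (hQs : ∀ s a, Qs s a = Topt γ P R Qs s a) (s : S) (a : A) :
    Qpol γ P pol R s a ≤ Qs s a := by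
  set F : S → A → ℝ := fun s a => Qpol γ P pol R s a - Qs s a with hF
  have hfix : ∀ s a, F s a ≤ 0 + γ * nsup F := by
    intro s a
    have hQle : ∀ s a, Qpol γ P pol R s a ≤ Qs s a + nsup F :=
      fun s a => by have := le_nsup F s a; simp only [hF] at this ⊢; linarith
    have h1 := Tpi_shift hγ0 hP hpol (R := R) hQle s a
    have h2 := Tpi_le_Topt hγ0 hP hpol (R := R) Qs s a
    have e1 := Qpol_bellman hγ0 hγ1 hP hpol R s a
    show Qpol γ P pol R s a - Qs s a ≤ 0 + γ * nsup F
    rw [e1, hQs s a]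
    linarith
  have := nsup_fix hγ1 hfix
  have h0 : nsup F ≤ 0 := by
    have : (0:ℝ) / (1 - γ) = 0 := zero_div _
    linarith [nsup_fix hγ1 hfix, this.symm.le]
  have := le_trans (le_nsup F s a) h0
  simp only [hF] at this
  linarith

/-- Approximate soft policy improvement. -/
lemma improve (hγ : γ ∈ Set.Ioo (0:ℝ) 1) (hP : IsKernel P)
    {pk : S → A → ℝ} (hpk : IsPolicy pk) {R Qh Qs : S → A → ℝ} {ε δ : ℝ}
    (hQs : ∀ s a, Qs s a = Topt γ P R Qs s a)
    (he : ∀ s a, |Qh s a - Qpol γ P pk R s a| ≤ ε)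
    (hδ : ∀ s a, |Qpol γ P pk R s a - Qs s a| ≤ δ) :
    ∀ s a, |Qpol γ P (softmax Qh) R s a - Qs s a| ≤ γ * δ + 2 * γ * ε / (1 - γ) := by
  obtain ⟨hγ0, hγ1⟩ := hγ
  have hγ0' : (0:ℝ) ≤ γ := hγ0.le
  have h1γ : (0:ℝ) < 1 - γ := by linarith
  obtain ⟨s₀⟩ := (inferInstance : Nonempty S)
  obtain ⟨a₀⟩ := (inferInstance : Nonempty A)
  have hε0 : 0 ≤ ε := le_trans (abs_nonneg _) (he s₀ a₀)
  have hδ0 : 0 ≤ δ := le_trans (abs_nonneg _) (hδ s₀ a₀)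
  set pp := softmax Qh with hpp
  have hπpol : IsPolicy pp := softmax_policy Qh
  set Qπ : S → A → ℝ := Qpol γ P pp R with hQπ
  -- Step B : Qh is an approximate fixed point of Topt
  have stepB : ∀ s a, Qh s a ≤ Topt γ P R Qh s a + (1 + γ) * ε := by
    intro s a
    have h1 : Qh s a ≤ Qpol γ P pk R s a + ε := by
      have := he s a; rw [abs_le] at this; linarith
    have h2 := Qpol_bellman hγ0' hγ1 hP hpk R s a
    have h3 := Tpi_le_Topt hγ0' hP hpk (R := R) (Qpol γ P pk R) s a
    have h4 : ∀ s a, Qpol γ P pk R s a ≤ Qh s a + ε := by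
      intro s a; have := he s a; rw [abs_le] at this; linarith
    have h5 := Topt_shift hγ0' hP (R := R) h4 s a
    nlinarith
  -- Step C : Qh is close to Qπ from above
  have stepC : ∀ s a, Qh s a - Qπ s a ≤ (1 + γ) * ε / (1 - γ) := by
    set F : S → A → ℝ := fun s a => Qh s a - Qπ s a with hF
    have hfix : ∀ s a, F s a ≤ (1 + γ) * ε + γ * nsup F := by
      intro s a
      have hQle : ∀ s a, Qh s a ≤ Qπ s a + nsup F :=
        fun s a => by have := le_nsup F s a; simp only [hF] at this ⊢; linarith
      have h1 := Tpi_shift hγ0' hP hπpol (R := R) hQle s a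
      have h2 : Topt γ P R Qh s a = Tpi γ P pp R Qh s a := (Tpi_softmax Qh s a).symm
      have h3 := Qpol_bellman hγ0' hγ1 hP hπpol R s a
      have h4 := stepB s a
      show Qh s a - Qπ s a ≤ (1 + γ) * ε + γ * nsup F
      rw [hQπ, h3]
      rw [h2] at h4
      linarith
    intro s a
    exact le_trans (show Qh s a - Qπ s a ≤ nsup F from le_nsup F s a) (nsup_fix hγ1 hfix)
  -- Step D : lower bound
  have stepD : ∀ s a, Qs s a - Qπ s a ≤ γ * (δ + ε) + γ * ((1 + γ) * ε / (1 - γ)) := by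
    intro s a
    have hQsle : ∀ s a, Qs s a ≤ Qh s a + (δ + ε) := by
      intro s a
      have h1 := he s a; have h2 := hδ s a
      rw [abs_le] at h1 h2; linarith
    have h1 := Topt_shift hγ0' hP (R := R) hQsle s a
    have h2 : Topt γ P R Qh s a = Tpi γ P pp R Qh s a := (Tpi_softmax Qh s a).symm
    have hQhle : ∀ s a, Qh s a ≤ Qπ s a + (1 + γ) * ε / (1 - γ) := by
      intro s a; have := stepC s a; linarith
    have h3 := Tpi_shift hγ0' hP hπpol (R := R) hQhle s a
    have h4 := Qpol_bellman hγ0' hγ1 hP hπpol R s a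
    rw [hQs s a, hQπ, h4]
    rw [h2] at h1
    linarith
  intro s a
  have hub := Qpol_le_Qopt hγ0' hγ1 hP hπpol hQs s a
  have hlb := stepD s a
  have harith : γ * (δ + ε) + γ * ((1 + γ) * ε / (1 - γ)) = γ * δ + 2 * γ * ε / (1 - γ) := by
    field_simp
    ring
  rw [abs_le]
  constructor
  · rw [← harith]; linarith
  · have : 0 ≤ γ * δ + 2 * γ * ε / (1 - γ) := by positivity
    linarith

/-- The key one-iteration recursion. -/
lemma key_step (hγ : γ ∈ Set.Ioo (0:ℝ) 1) (hP : IsKernel P)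
    {pk : S → A → ℝ} (hpk : IsPolicy pk) {R R' Qh Qs Qs' : S → A → ℝ} {ε δ ρ : ℝ}
    (hQs : ∀ s a, Qs s a = Topt γ P R Qs s a)
    (hQs' : ∀ s a, Qs' s a = Topt γ P R' Qs' s a)
    (he : ∀ s a, |Qh s a - Qpol γ P pk R s a| ≤ ε)
    (hδ : ∀ s a, |Qpol γ P pk R s a - Qs s a| ≤ δ)
    (hρ : ∀ s a, |R s a - R' s a| ≤ ρ) :
    ∀ s a, |Qpol γ P (softmax Qh) R' s a - Qs' s a| ≤
      γ * δ + 2 * γ * ε / (1 - γ) + 2 * ρ / (1 - γ) := by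
  intro s a
  obtain ⟨hγ0, hγ1⟩ := hγ
  have h1 := Qpol_reward_lip (pol := softmax Qh) hγ0.le hγ1 hP (softmax_policy Qh)
    (R := R') (R' := R) (fun s a => by have := hρ s a; rw [abs_sub_comm] at this; exact this) s a
  have h2 := improve ⟨hγ0, hγ1⟩ hP hpk hQs he hδ s a
  have h3 := Qopt_reward_lip hγ0.le hγ1 hP hQs hQs' hρ s a
  calc |Qpol γ P (softmax Qh) R' s a - Qs' s a|
      ≤ |Qpol γ P (softmax Qh) R' s a - Qpol γ P (softmax Qh) R s a|
        + |Qpol γ P (softmax Qh) R s a - Qs s a| + |Qs s a - Qs' s a| := by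
        have := abs_sub_le (Qpol γ P (softmax Qh) R' s a) (Qpol γ P (softmax Qh) R s a) (Qs' s a)
        have h4 := abs_sub_le (Qpol γ P (softmax Qh) R s a) (Qs s a) (Qs' s a)
        linarith
    _ ≤ ρ / (1 - γ) + (γ * δ + 2 * γ * ε / (1 - γ)) + ρ / (1 - γ) := by
        gcongr <;> assumption
    _ = γ * δ + 2 * γ * ε / (1 - γ) + 2 * ρ / (1 - γ) := by ring

end MLIRLAux4

section MLIRLAux5
set_option linter.unusedSectionVars false
variable {S A : Type} [Fintype S] [Fintype A] [Nonempty S] [Nonempty A] [DecidableEq S]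

lemma log_softmax_lip {Q₁ Q₂ : S → A → ℝ} {m : ℝ} (h : ∀ s a, |Q₁ s a - Q₂ s a| ≤ m)
    (s : S) (a : A) :
    |Real.log (softmax Q₁ s a) - Real.log (softmax Q₂ s a)| ≤ 2 * m := by
  rw [log_softmax, log_softmax]
  have h1 : lse Q₁ s ≤ lse Q₂ s + m :=
    lse_le_of_le s fun a => by have := h s a; rw [abs_le] at this; linarith
  have h2 : lse Q₂ s ≤ lse Q₁ s + m :=
    lse_le_of_le s fun a => by have := h s a; rw [abs_le] at this; linarith
  have h3 := h s a
  rw [abs_le] at h3 ⊢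
  constructor <;> linarith [h3.1, h3.2]

end MLIRLAux5

set_option maxHeartbeats 1000000

/-- **Theorem 4(i), convergence of the policy estimates.**
Run Offline ML-IRL for `K` iterations with stepsize `α = α₀ K^{-1/2}`.  Assume the
reward gradients are bounded by `L_r` and `L_g`-Lipschitz in `θ`, and that the initial
error satisfies `‖Q_0 - Q_{θ_0}‖_∞ ≤ Δ₀`.  Then, with `L_q = L_r/(1-γ)`,
`(1/K) ∑_{k<K} E[‖log π_{k+1} - log π_{θ_k}‖_∞] ≤
  (2 + 4γ/(1-γ)²) ε_app + 2Δ₀/((1-γ)K) + 8α₀ L_q²/((1-γ)√K)`,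
which is `O(K^{-1/2}) + O(ε_app)`. -/

theorem stmt18 {S A : Type} [Fintype S] [Fintype A] [Nonempty S] [Nonempty A]
    [DecidableEq S] (d : ℕ)
    (γ : ℝ) (hγ : γ ∈ Set.Ioo (0 : ℝ) 1)
    (Phat : S → A → S → ℝ) (hPhat : IsKernel Phat)
    (r : S → A → EuclideanSpace ℝ (Fin d) → ℝ) (U : S → A → ℝ)
    (hrd : ∀ s a, Differentiable ℝ (r s a))
    (Lr Lg : ℝ) (hrb : ∀ s a θ, ‖gradient (r s a) θ‖ ≤ Lr)
    (hrlip : ∀ s a θ₁ θ₂, ‖gradient (r s a) θ₁ - gradient (r s a) θ₂‖ ≤ Lg * ‖θ₁ - θ₂‖)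
    (QO : EuclideanSpace ℝ (Fin d) → S → A → ℝ)
    (hQO : ∀ θ s a, QO θ s a = r s a θ + U s a + γ * ∑ s', Phat s a s' * lse (QO θ) s')
    (Ωm : Type) [MeasureSpace Ωm] [IsProbabilityMeasure (ℙ : Measure Ωm)]
    (K : ℕ) (hK : 0 < K) (α0 : ℝ) (hα0 : 0 < α0)
    (εapp Δ₀ : ℝ)
    (θ : ℕ → Ωm → EuclideanSpace ℝ (Fin d))
    (g : ℕ → Ωm → EuclideanSpace ℝ (Fin d))
    (πseq : ℕ → Ωm → S → A → ℝ)
    (Qhat : ℕ → Ωm → S → A → ℝ)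
    (τE τA : ℕ → Ωm → ℕ → S × A)
    (hθmeas : ∀ k, Measurable (θ k))
    (hQhatmeas : ∀ k s a, Measurable fun ω => Qhat k ω s a)
    (hpol0 : ∀ ω, IsPolicy (πseq 0 ω))
    (happ : ∀ k ω s a,
      |Qhat k ω s a -
          Qpol γ Phat (πseq k ω) (fun s a => r s a (θ k ω) + U s a) s a| ≤ εapp)
    (hpolstep : ∀ k ω, πseq (k + 1) ω = softmax (Qhat k ω))
    (hgdef : ∀ k ω, g k ω =
      (∑' t : ℕ, γ ^ t • gradient (r (τE k ω t).1 (τE k ω t).2) (θ k ω)) -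
        ∑' t : ℕ, γ ^ t • gradient (r (τA k ω t).1 (τA k ω t).2) (θ k ω))
    (hupd : ∀ k ω, θ (k + 1) ω = θ k ω + (α0 / Real.sqrt K) • g k ω)
    (hinit : ∀ ω s a,
      |Qpol γ Phat (πseq 0 ω) (fun s a => r s a (θ 0 ω) + U s a) s a -
          QO (θ 0 ω) s a| ≤ Δ₀) :
    (1 / K : ℝ) * ∑ k ∈ Finset.range K,
        (∫ ω, Finset.univ.sup' Finset.univ_nonempty
          (fun p : S × A =>
            |Real.log (πseq (k + 1) ω p.1 p.2) -
              Real.log (softmax (QO (θ k ω)) p.1 p.2)|) ∂ℙ) ≤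
      (2 + 4 * γ / (1 - γ) ^ 2) * εapp + 2 * Δ₀ / ((1 - γ) * K) +
        8 * α0 * (Lr / (1 - γ)) ^ 2 / ((1 - γ) * Real.sqrt K) := by
  obtain ⟨hγ0, hγ1⟩ := hγ
  have h1γ : (0:ℝ) < 1 - γ := by linarith
  obtain ⟨ω₀, -⟩ := MeasureTheory.nonempty_of_measure_ne_zero
    (μ := (ℙ : Measure Ωm)) (s := Set.univ) (by rw [measure_univ]; exact one_ne_zero)
  obtain ⟨s₀⟩ := (inferInstance : Nonempty S)
  obtain ⟨a₀⟩ := (inferInstance : Nonempty A)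
  have hε0 : 0 ≤ εapp := le_trans (abs_nonneg _) (happ 0 ω₀ s₀ a₀)
  have hΔ0 : 0 ≤ Δ₀ := le_trans (abs_nonneg _) (hinit ω₀ s₀ a₀)
  have hLr0 : 0 ≤ Lr := le_trans (norm_nonneg _) (hrb s₀ a₀ 0)
  have hKpos : (0:ℝ) < (K:ℝ) := by exact_mod_cast hK
  have hsqK : (0:ℝ) < Real.sqrt K := Real.sqrt_pos.2 hKpos
  set α : ℝ := α0 / Real.sqrt K with hα
  have hαpos : 0 < α := div_pos hα0 hsqK
  -- Lipschitz continuity of the reward in θ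
  have hrL : ∀ s a (θ₁ θ₂ : EuclideanSpace ℝ (Fin d)),
      |r s a θ₁ - r s a θ₂| ≤ Lr * ‖θ₁ - θ₂‖ := by
    intro s a θ₁ θ₂
    have hb : ∀ x ∈ Set.univ, ‖fderiv ℝ (r s a) x‖ ≤ Lr := by
      intro x _
      have heq : ‖fderiv ℝ (r s a) x‖ = ‖gradient (r s a) x‖ := by
        unfold gradient
        rw [LinearIsometryEquiv.norm_map]
      rw [heq]; exact hrb s a x
    have := Convex.norm_image_sub_le_of_norm_fderiv_le
      (fun x _ => (hrd s a).differentiableAt) hb convex_univ (Set.mem_univ θ₂) (Set.mem_univ θ₁)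
    rwa [Real.norm_eq_abs] at this
  -- bound on the stochastic gradients
  have hgb : ∀ k ω, ‖g k ω‖ ≤ 2 * Lr / (1 - γ) := by
    intro k ω
    rw [hgdef k ω]
    have htsum : ∀ (f : ℕ → S × A),
        ‖∑' t : ℕ, γ ^ t • gradient (r (f t).1 (f t).2) (θ k ω)‖ ≤ Lr / (1 - γ) := by
      intro f
      have hle : ∀ t : ℕ, ‖γ ^ t • gradient (r (f t).1 (f t).2) (θ k ω)‖ ≤ Lr * γ ^ t := by
        intro t
        rw [norm_smul, Real.norm_eq_abs, abs_pow, abs_of_nonneg hγ0.le, mul_comm]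
        exact mul_le_mul_of_nonneg_right (hrb _ _ _) (pow_nonneg hγ0.le t)
      have hsgeo : Summable (fun t : ℕ => Lr * γ ^ t) :=
        (summable_geometric_of_lt_one hγ0.le hγ1).mul_left Lr
      have hsn : Summable (fun t : ℕ => ‖γ ^ t • gradient (r (f t).1 (f t).2) (θ k ω)‖) :=
        Summable.of_nonneg_of_le (fun t => norm_nonneg _) hle hsgeo
      calc ‖∑' t : ℕ, γ ^ t • gradient (r (f t).1 (f t).2) (θ k ω)‖
          ≤ ∑' t : ℕ, ‖γ ^ t • gradient (r (f t).1 (f t).2) (θ k ω)‖ :=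
            norm_tsum_le_tsum_norm hsn
        _ ≤ ∑' t : ℕ, Lr * γ ^ t := Summable.tsum_le_tsum hle hsn hsgeo
        _ = Lr * (1 - γ)⁻¹ := by rw [tsum_mul_left, tsum_geometric_of_lt_one hγ0.le hγ1]
        _ = Lr / (1 - γ) := by rw [div_eq_mul_inv]
    calc ‖(∑' t : ℕ, γ ^ t • gradient (r (τE k ω t).1 (τE k ω t).2) (θ k ω)) -
          ∑' t : ℕ, γ ^ t • gradient (r (τA k ω t).1 (τA k ω t).2) (θ k ω)‖
        ≤ ‖∑' t : ℕ, γ ^ t • gradient (r (τE k ω t).1 (τE k ω t).2) (θ k ω)‖ +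
          ‖∑' t : ℕ, γ ^ t • gradient (r (τA k ω t).1 (τA k ω t).2) (θ k ω)‖ :=
          norm_sub_le _ _
      _ ≤ Lr / (1 - γ) + Lr / (1 - γ) := add_le_add (htsum _) (htsum _)
      _ = 2 * Lr / (1 - γ) := by ring
  have hθd : ∀ k ω, ‖θ (k+1) ω - θ k ω‖ ≤ α * (2 * Lr / (1 - γ)) := by
    intro k ω
    rw [hupd k ω, add_sub_cancel_left, norm_smul, Real.norm_eq_abs, abs_of_pos hαpos]
    exact mul_le_mul_of_nonneg_left (hgb k ω) hαpos.le
  -- all iterates are policies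
  have hpolk : ∀ k (ω : Ωm), IsPolicy (πseq k ω) := by
    intro k
    induction k with
    | zero => exact hpol0
    | succ k _ => intro ω; rw [hpolstep k ω]; exact softmax_policy _
  -- optimal Q-functions are fixed points of Topt
  have hQOfix : ∀ (v : EuclideanSpace ℝ (Fin d)) s a,
      QO v s a = Topt γ Phat (fun s a => r s a v + U s a) (QO v) s a := by
    intro v s a
    rw [hQO v s a]; rfl
  -- the error recursion
  set ρ : ℝ := Lr * (α * (2 * Lr / (1 - γ))) with hρdef
  have hρ0 : 0 ≤ ρ := by
    have : 0 ≤ α * (2 * Lr / (1 - γ)) := mul_nonneg hαpos.le (by positivity)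
    exact mul_nonneg hLr0 this
  set C : ℝ := 2 * γ * εapp / (1 - γ) + 2 * ρ / (1 - γ) with hC
  have hC0 : 0 ≤ C := by positivity
  set B : ℕ → ℝ := fun k => γ ^ k * Δ₀ + C / (1 - γ) with hB
  have hB0 : ∀ k, 0 ≤ B k := by
    intro k
    simp only [hB]
    have := pow_nonneg hγ0.le k
    positivity
  have hδk : ∀ k ω s a,
      |Qpol γ Phat (πseq k ω) (fun s a => r s a (θ k ω) + U s a) s a - QO (θ k ω) s a|
        ≤ B k := by
    intro k
    induction k with
    | zero =>
      intro ω s a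
      refine le_trans (hinit ω s a) ?_
      simp only [hB, pow_zero, one_mul]
      have : 0 ≤ C / (1 - γ) := div_nonneg hC0 h1γ.le
      linarith
    | succ k ih =>
      intro ω s a
      have hρb : ∀ s a, |r s a (θ k ω) + U s a - (r s a (θ (k+1) ω) + U s a)| ≤ ρ := by
        intro s a
        have h4 : r s a (θ k ω) + U s a - (r s a (θ (k+1) ω) + U s a)
            = r s a (θ k ω) - r s a (θ (k+1) ω) := by ring
        rw [h4]
        calc |r s a (θ k ω) - r s a (θ (k+1) ω)| ≤ Lr * ‖θ k ω - θ (k+1) ω‖ := hrL _ _ _ _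
          _ = Lr * ‖θ (k+1) ω - θ k ω‖ := by rw [norm_sub_rev]
          _ ≤ ρ := by
              rw [hρdef]
              exact mul_le_mul_of_nonneg_left (hθd k ω) hLr0
      have hks := key_step (γ := γ) (P := Phat) ⟨hγ0, hγ1⟩ hPhat (hpolk k ω)
        (hQOfix (θ k ω)) (hQOfix (θ (k+1) ω)) (happ k ω) (ih ω) hρb s a
      rw [hpolstep k ω]
      refine le_trans hks ?_
      have harith : γ * B k + 2 * γ * εapp / (1 - γ) + 2 * ρ / (1 - γ) = γ * B k + C := by
        rw [hC]; ring
      rw [harith]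
      simp only [hB]
      have h2 : ∀ x y : ℝ, γ * (y + x / (1 - γ)) + x = γ * y + x / (1 - γ) := by
        intro x y
        field_simp
        ring
      have h3 : γ * (γ ^ k * Δ₀ + C / (1 - γ)) + C = γ ^ (k+1) * Δ₀ + C / (1 - γ) := by
        rw [h2 C (γ ^ k * Δ₀), pow_succ]; ring
      exact le_of_eq h3
  -- per-iteration integral bound
  have hint : ∀ k, (∫ ω, Finset.univ.sup' Finset.univ_nonempty
      (fun p : S × A =>
        |Real.log (πseq (k + 1) ω p.1 p.2) -
          Real.log (softmax (QO (θ k ω)) p.1 p.2)|) ∂ℙ) ≤ 2 * εapp + 2 * B k := by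
    intro k
    have hfb : ∀ ω, Finset.univ.sup' Finset.univ_nonempty
        (fun p : S × A =>
          |Real.log (πseq (k + 1) ω p.1 p.2) -
            Real.log (softmax (QO (θ k ω)) p.1 p.2)|) ≤ 2 * εapp + 2 * B k := by
      intro ω
      refine Finset.sup'_le _ _ fun p _ => ?_
      rw [hpolstep k ω]
      have hm : ∀ s a, |Qhat k ω s a - QO (θ k ω) s a| ≤ εapp + B k := by
        intro s a
        have h1 := happ k ω s a
        have h2 := hδk k ω s a
        calc |Qhat k ω s a - QO (θ k ω) s a|
            ≤ |Qhat k ω s a -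
                Qpol γ Phat (πseq k ω) (fun s a => r s a (θ k ω) + U s a) s a| +
              |Qpol γ Phat (πseq k ω) (fun s a => r s a (θ k ω) + U s a) s a -
                QO (θ k ω) s a| := abs_sub_le _ _ _
          _ ≤ εapp + B k := add_le_add h1 h2
      have := log_softmax_lip hm p.1 p.2
      linarith
    have hf0 : ∀ ω, 0 ≤ Finset.univ.sup' Finset.univ_nonempty
        (fun p : S × A =>
          |Real.log (πseq (k + 1) ω p.1 p.2) -
            Real.log (softmax (QO (θ k ω)) p.1 p.2)|) := by
      intro ω
      exact le_trans (abs_nonneg _)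
        (Finset.le_sup' (fun p : S × A =>
          |Real.log (πseq (k + 1) ω p.1 p.2) -
            Real.log (softmax (QO (θ k ω)) p.1 p.2)|)
          (Finset.mem_univ ((s₀, a₀) : S × A)))
    have hb := MeasureTheory.norm_integral_le_of_norm_le_const
      (μ := (ℙ : Measure Ωm)) (C := 2 * εapp + 2 * B k)
      (f := fun ω => Finset.univ.sup' Finset.univ_nonempty
        (fun p : S × A =>
          |Real.log (πseq (k + 1) ω p.1 p.2) -
            Real.log (softmax (QO (θ k ω)) p.1 p.2)|))
      (Filter.Eventually.of_forall fun ω => by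
        rw [Real.norm_eq_abs, abs_of_nonneg (hf0 ω)]; exact hfb ω)
    rw [probReal_univ, mul_one, Real.norm_eq_abs] at hb
    exact le_trans (le_abs_self _) hb
  -- sum up
  have hgeo : ∑ k ∈ Finset.range K, γ ^ k ≤ 1 / (1 - γ) := by
    rw [geom_sum_eq (ne_of_lt hγ1) K]
    have heq : (γ ^ K - 1) / (γ - 1) = (1 - γ ^ K) / (1 - γ) := by
      rw [div_eq_div_iff (by linarith) (by linarith)]; ring
    rw [heq, div_le_div_iff₀ h1γ h1γ]
    nlinarith [pow_nonneg hγ0.le K]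
  have hsumle : ∑ k ∈ Finset.range K,
      (∫ ω, Finset.univ.sup' Finset.univ_nonempty
        (fun p : S × A =>
          |Real.log (πseq (k + 1) ω p.1 p.2) -
            Real.log (softmax (QO (θ k ω)) p.1 p.2)|) ∂ℙ)
      ≤ (K : ℝ) * (2 * εapp + 2 * (C / (1 - γ))) + (2 * Δ₀) * (1 / (1 - γ)) := by
    calc ∑ k ∈ Finset.range K,
        (∫ ω, Finset.univ.sup' Finset.univ_nonempty
          (fun p : S × A =>
            |Real.log (πseq (k + 1) ω p.1 p.2) -
              Real.log (softmax (QO (θ k ω)) p.1 p.2)|) ∂ℙ)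
        ≤ ∑ k ∈ Finset.range K, (2 * εapp + 2 * B k) :=
          Finset.sum_le_sum fun k _ => hint k
      _ = ∑ k ∈ Finset.range K, (2 * εapp + 2 * (C / (1 - γ)) + (2 * Δ₀) * γ ^ k) := by
          refine Finset.sum_congr rfl fun k _ => ?_
          simp only [hB]; ring
      _ = (K : ℝ) * (2 * εapp + 2 * (C / (1 - γ))) + (2 * Δ₀) * ∑ k ∈ Finset.range K, γ ^ k := by
          rw [Finset.sum_add_distrib, Finset.sum_const, Finset.card_range, ← Finset.mul_sum,
            nsmul_eq_mul]
      _ ≤ (K : ℝ) * (2 * εapp + 2 * (C / (1 - γ))) + (2 * Δ₀) * (1 / (1 - γ)) := by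
          gcongr
  have hKinv : (0:ℝ) ≤ 1 / (K : ℝ) := by positivity
  calc (1 / K : ℝ) * ∑ k ∈ Finset.range K,
        (∫ ω, Finset.univ.sup' Finset.univ_nonempty
          (fun p : S × A =>
            |Real.log (πseq (k + 1) ω p.1 p.2) -
              Real.log (softmax (QO (θ k ω)) p.1 p.2)|) ∂ℙ)
      ≤ (1 / K : ℝ) * ((K : ℝ) * (2 * εapp + 2 * (C / (1 - γ))) + (2 * Δ₀) * (1 / (1 - γ))) :=
        mul_le_mul_of_nonneg_left hsumle hKinv
    _ = 2 * εapp + 2 * (C / (1 - γ)) + 2 * Δ₀ / ((1 - γ) * K) := by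
        field_simp
    _ = (2 + 4 * γ / (1 - γ) ^ 2) * εapp + 2 * Δ₀ / ((1 - γ) * K) +
        8 * α0 * (Lr / (1 - γ)) ^ 2 / ((1 - γ) * Real.sqrt K) := by
        rw [hC, hρdef, hα]
        field_simp
        ring
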